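/- arXiv:2506.05907 — 3 statements merged into one kernel-verified Lean document; each statement's English description precedes it below -/
import Mathlib

section
/- Let (Ω, 𝒜) carry a measurable flow θ and a stationary probability measure P, let Φ be an invariant random measure on ℝ^d with intensity γ ∈ (0, ∞), and let K be an invariant probability kernel from Ω × ℝ^d to ℝ^d. Then for every Borel set B ⊆ ℝ^d, α_{KΦ}(B) = γ ∫_Ω [∫ (K(ω, y, ·) ⋆ K(ω, 0, ·))(B) Φ(ω, dy)] P^Φ_0(dω), where α_{KΦ} is the reduced second moment measure of the stationary random measure KΦ and ν ⋆ ν' := ∫∫ 1{x − y ∈ ·} ν(dx) ν'(dy) is the tilted convolution of measures ν, ν' on ℝ^d. If in addition Φ is locally square-integrable and P^Φ_{0,y} is a two-point Palm kernel for Φ, then also α_{KΦ}(B) = ∫_{ℝ^d} [∫_Ω (K(ω, y, ·) ⋆ K(ω, 0, ·))(B) P^Φ_{0,y}(dω)] α_Φ(dy) for every Borel B. -/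
open MeasureTheory Filter Set ProbabilityTheory
open scoped ENNReal NNReal Topology Pointwise

noncomputable section

/-- Euclidean space `ℝ^d`. -/
abbrev Euc (d : ℕ) : Type := EuclideanSpace ℝ (Fin d)

/-- The unit cube `[0,1]^d`. -/
def unitCube (d : ℕ) : Set (Euc d) := {x | ∀ i, x i ∈ Icc (0 : ℝ) 1}

/-- The half-open unit cube `[0,1)^d`. -/
def cubeIco (d : ℕ) : Set (Euc d) := {x | ∀ i, x i ∈ Ico (0 : ℝ) 1}

/-- A measurable flow on `Ω` indexed by `ℝ^d`. -/
def IsFlow {d : ℕ} {Ω : Type*} [MeasurableSpace Ω] (θ : Euc d → Ω → Ω) : Prop :=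
  Measurable (fun p : Euc d × Ω => θ p.1 p.2) ∧ θ 0 = id ∧ ∀ x y, θ x ∘ θ y = θ (x + y)

/-- A random measure is invariant under the flow `θ`:
`Φ(θ_x ω, B) = Φ(ω, B + x)`, where `B + x = {y | y - x ∈ B}`. -/
def InvariantRM {d : ℕ} {Ω : Type*} (θ : Euc d → Ω → Ω) (Φ : Ω → Measure (Euc d)) : Prop :=
  ∀ ω (x : Euc d) (B : Set (Euc d)), MeasurableSet B →
    Φ (θ x ω) B = Φ ω ((fun y => y - x) ⁻¹' B)

/-- Stationarity of a random measure: for each `x`, the random measure `B ↦ Φ(B + x)`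
has the same distribution as `Φ`. -/
def StationaryRM {d : ℕ} {Ω : Type*} [MeasurableSpace Ω] (P : Measure Ω)
    (Φ : Ω → Measure (Euc d)) : Prop :=
  ∀ x : Euc d,
    Measure.map (fun ω => Measure.map (fun y => y - x) (Φ ω)) P = Measure.map Φ P

/-- Local square-integrability: `E[Φ(B)²] < ∞` for every bounded Borel set `B`. -/
def LocSqInt {d : ℕ} {Ω : Type*} [MeasurableSpace Ω] (P : Measure Ω)
    (Φ : Ω → Measure (Euc d)) : Prop :=
  ∀ B : Set (Euc d), MeasurableSet B → Bornology.IsBounded B →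
    ∫⁻ ω, (Φ ω B) ^ 2 ∂P < ⊤

/-- `Φ` has intensity `γ`, i.e. `E[Φ([0,1]^d)] = γ`. -/
def HasIntensity {d : ℕ} {Ω : Type*} [MeasurableSpace Ω] (P : Measure Ω)
    (Φ : Ω → Measure (Euc d)) (γ : ℝ≥0∞) : Prop :=
  ∫⁻ ω, Φ ω (unitCube d) ∂P = γ

/-- `α` is the reduced second moment measure of `Φ`:
`α(B) = E[∫∫ 1{x ∈ [0,1]^d, y - x ∈ B} Φ(dy) Φ(dx)]`. -/
def IsReducedSecondMoment {d : ℕ} {Ω : Type*} [MeasurableSpace Ω] (P : Measure Ω)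
    (Φ : Ω → Measure (Euc d)) (α : Measure (Euc d)) : Prop :=
  ∀ B : Set (Euc d), MeasurableSet B →
    α B = ∫⁻ ω, ∫⁻ x in unitCube d, Φ ω ((fun y => y - x) ⁻¹' B) ∂(Φ ω) ∂P

/-- An invariant probability kernel from `Ω × ℝ^d` to `ℝ^d`:
jointly measurable, probability-valued and `K(ω, x, B + x) = K(θ_x ω, 0, B)`. -/
def IsInvariantKernel {d : ℕ} {Ω : Type*} [MeasurableSpace Ω]
    (θ : Euc d → Ω → Ω) (K : Ω → Euc d → Measure (Euc d)) : Prop :=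
  Measurable (fun p : Ω × Euc d => K p.1 p.2) ∧
  (∀ ω x, IsProbabilityMeasure (K ω x)) ∧
  ∀ ω (x : Euc d) (B : Set (Euc d)), MeasurableSet B →
    K ω x ((fun y => y - x) ⁻¹' B) = K (θ x ω) 0 B

/-- The destination `KΦ(ω, ·) = ∫ K(ω, x, ·) Φ(ω, dx)`. -/
def transported {d : ℕ} {Ω : Type*} [MeasurableSpace Ω] (K : Ω → Euc d → Measure (Euc d))
    (Φ : Ω → Measure (Euc d)) (ω : Ω) : Measure (Euc d) :=
  (Φ ω).bind (K ω)

/-- The recentred kernel `K*(ω, x, B) := K(ω, x, B + x)`. -/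
def recenter {d : ℕ} {Ω : Type*} (K : Ω → Euc d → Measure (Euc d)) (ω : Ω) (x : Euc d) :
    Measure (Euc d) :=
  Measure.map (fun y => y - x) (K ω x)

/-- Total variation norm between two measures: `‖μ − ν‖ = 2 sup_A |μ(A) − ν(A)|`. -/
def tvDist {X : Type*} [MeasurableSpace X] (μ ν : Measure X) : ℝ≥0∞ :=
  2 * ⨆ (A : Set X) (_ : MeasurableSet A), max (μ A - ν A) (ν A - μ A)

/-- Variance of the (extended-real-valued) random variable `f` under `P`. -/
def rVar {Ω : Type*} [MeasurableSpace Ω] (P : Measure Ω) (f : Ω → ℝ≥0∞) : ℝ :=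
  (∫ ω, ((f ω).toReal) ^ 2 ∂P) - (∫ ω, (f ω).toReal ∂P) ^ 2

/-- `Ψ` has asymptotic variance `c` with respect to the window `W`:
`Var[Ψ(rW)] / λ_d(rW) → c` as `r → ∞`. -/
def HasAsymptoticVariance {d : ℕ} {Ω : Type*} [MeasurableSpace Ω] (P : Measure Ω)
    (Ψ : Ω → Measure (Euc d)) (W : Set (Euc d)) (c : ℝ) : Prop :=
  Tendsto (fun r : ℝ => rVar P (fun ω => Ψ ω (r • W)) / (volume (r • W)).toReal)
    atTop (𝓝 c)

/-- Hyperuniformity with respect to `W`: vanishing asymptotic variance. -/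
def Hyperuniform {d : ℕ} {Ω : Type*} [MeasurableSpace Ω] (P : Measure Ω)
    (Ψ : Ω → Measure (Euc d)) (W : Set (Euc d)) : Prop :=
  HasAsymptoticVariance P Ψ W 0

/-- `W ∈ 𝒦₀`: bounded convex set containing `0` in its interior. -/
def IsK0 {d : ℕ} (W : Set (Euc d)) : Prop :=
  Convex ℝ W ∧ Bornology.IsBounded W ∧ (0 : Euc d) ∈ interior W

/-- A set `W` is Fourier smooth: `|𝟙_W^(k)| ≤ c (1 + ‖k‖)^{-(d+ϑ)/2}`. -/
def FourierSmooth {d : ℕ} (W : Set (Euc d)) : Prop :=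
  ∃ c t : ℝ, 0 < c ∧ 0 < t ∧ ∀ k : Euc d,
    ‖∫ x in W, Complex.exp (-((inner ℝ k x : ℝ) : ℂ) * Complex.I)‖ ≤
      c * (1 + ‖k‖) ^ (-(((d : ℝ) + t) / 2))

/-- `P0` is the Palm probability measure of `Φ`:
`γ P0(A) = E[∫ 1{θ_x ω ∈ A} 1{x ∈ [0,1]^d} Φ(ω, dx)]`. -/
def IsPalm {d : ℕ} {Ω : Type*} [MeasurableSpace Ω] (P : Measure Ω) (θ : Euc d → Ω → Ω)
    (Φ : Ω → Measure (Euc d)) (γ : ℝ≥0∞) (P0 : Measure Ω) : Prop :=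
  IsProbabilityMeasure P0 ∧
  ∀ A : Set Ω, MeasurableSet A →
    γ * P0 A = ∫⁻ ω, ∫⁻ x in unitCube d, A.indicator (fun _ => (1 : ℝ≥0∞)) (θ x ω) ∂(Φ ω) ∂P

/-- `P2` is a two-point Palm kernel of `Φ` (with reduced second moment measure `α`). -/
def IsTwoPointPalm {d : ℕ} {Ω : Type*} [MeasurableSpace Ω] (P : Measure Ω)
    (θ : Euc d → Ω → Ω) (Φ : Ω → Measure (Euc d)) (α : Measure (Euc d))
    (P2 : Euc d → Measure Ω) : Prop :=
  (∀ y, IsProbabilityMeasure (P2 y)) ∧ Measurable P2 ∧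
  ∀ f : Euc d → Euc d → Ω → ℝ≥0∞,
    Measurable (fun p : Euc d × Euc d × Ω => f p.1 p.2.1 p.2.2) →
    ∫⁻ ω, ∫⁻ x, ∫⁻ y, f x (y - x) (θ x ω) ∂(Φ ω) ∂(Φ ω) ∂P =
      ∫⁻ x, ∫⁻ y, ∫⁻ ω, f x y ω ∂(P2 y) ∂α ∂(volume : Measure (Euc d))

/-- Tilted convolution `ν ⋆ ν' = ∫∫ 1{x − y ∈ ·} ν(dx) ν'(dy)`. -/
def tconv {d : ℕ} (μ ν : Measure (Euc d)) : Measure (Euc d) :=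
  Measure.map (fun p : Euc d × Euc d => p.1 - p.2) (μ.prod ν)

/-- A measure on `ℝ^d` is purely discrete (purely atomic). -/
def PurelyDiscrete {d : ℕ} (μ : Measure (Euc d)) : Prop :=
  μ {x | μ {x} = 0} = 0

/-- A stationary family of `ℝ^d`-valued random vectors indexed by an additive group. -/
def IsStationaryFamily {ι Ω : Type*} [Add ι] [MeasurableSpace Ω] {d : ℕ}
    (P : Measure Ω) (Z : ι → Ω → Euc d) : Prop :=
  ∀ (v : ι) (n : ℕ) (x : Fin n → ι),
    Measure.map (fun ω (i : Fin n) => Z (x i + v) ω) P =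
      Measure.map (fun ω (i : Fin n) => Z (x i) ω) P

/-- A Gaussian family of `ℝ^d`-valued random vectors: every finite real linear
combination of coordinates is (possibly degenerate) Gaussian. -/
def IsGaussianFamily {ι Ω : Type*} [MeasurableSpace Ω] {d : ℕ}
    (P : Measure Ω) (Z : ι → Ω → Euc d) : Prop :=
  ∀ (n : ℕ) (x : Fin n → ι) (c : Fin n → Euc d), ∃ (m : ℝ) (v : ℝ≥0),
    Measure.map (fun ω => ∑ i, (inner ℝ (c i) (Z (x i) ω) : ℝ)) P = ProbabilityTheory.gaussianReal m v

/-- The cross-covariance matrix of two `ℝ^d`-valued random vectors. -/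
def covMat {Ω : Type*} [MeasurableSpace Ω] {d : ℕ} (P : Measure Ω) (X Y : Ω → Euc d) :
    Matrix (Fin d) (Fin d) ℝ :=
  Matrix.of fun i j => (∫ ω, X ω i * Y ω j ∂P) - (∫ ω, X ω i ∂P) * (∫ ω, Y ω j ∂P)

/-- The lattice point of `ℤ^d ⊆ ℝ^d` corresponding to `z`. -/
def latticePt (d : ℕ) (z : Fin d → ℤ) : Euc d :=
  (EuclideanSpace.equiv (Fin d) ℝ).symm (fun i => (z i : ℝ))

/-! Unfolding `KΦ(ω) = ∫ K(ω, x, ·) Φ(ω, dx)` and recentring `K` by its invariance writes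
`α_{KΦ}(B) = E ∫∫ f(u, v - u, θ_u ω) Φ(dv) Φ(du)` with
`f(u, y, ω) = ∫ 1{z + u ∈ [0,1]^d} K(ω, y, B + z) K(ω, 0, dz)`, and `∫ f(u, y, ω) du` is the
tilted convolution `(K(ω, y, ·) ⋆ K(ω, 0, ·))(B)`. The two-point Palm formula applies to this
expression directly. For the Palm formula, the invariance of `Φ` rewrites it as
`E ∫ F(θ_u ω, u) Φ(du)` with `F(ω, u) = ∫ f(u, v, ω) Φ(ω, dv)`, and the refined Campbell theorem
turns this into `γ ∫∫ F(ω, u) du P^Φ_0(dω)`. That theorem says the Campbell measure of `Φ` is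
`γ P^Φ_0 ⊗ λ_d`; on rectangles `A × D` this is uniqueness of translation-invariant measures. -/

section UnitCube

variable {d : ℕ}

lemma unitCube_eq_preimage :
    unitCube d = WithLp.ofLp ⁻¹' (Set.univ.pi fun _ : Fin d => Icc (0 : ℝ) 1) := by
  ext x
  simp only [unitCube, Set.mem_ofPred_eq, Set.mem_preimage, Set.mem_univ_pi]

lemma measurableSet_unitCube : MeasurableSet (unitCube d) := by
  rw [unitCube_eq_preimage]
  exact (MeasurableSet.univ_pi fun _ => measurableSet_Icc).preimage (by fun_prop)

lemma volume_unitCube : volume (unitCube d) = 1 := by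
  rw [unitCube_eq_preimage, (PiLp.volume_preserving_ofLp (Fin d)).measure_preimage
    (MeasurableSet.univ_pi fun _ => measurableSet_Icc).nullMeasurableSet, volume_pi_pi]
  simp [Real.volume_Icc]

lemma isCompact_unitCube : IsCompact (unitCube d) := by
  rw [unitCube_eq_preimage]
  exact (PiLp.homeomorph 2 fun _ : Fin d => ℝ).isCompact_preimage.2
    (isCompact_univ_pi fun _ => isCompact_Icc)

lemma interior_unitCube_nonempty : (interior (unitCube d)).Nonempty := by
  rw [unitCube_eq_preimage]
  refine ⟨WithLp.toLp 2 fun _ => 1 / 2, ?_⟩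
  change _ ∈ interior ((PiLp.homeomorph 2 fun _ : Fin d => ℝ) ⁻¹' _)
  rw [← (PiLp.homeomorph 2 fun _ : Fin d => ℝ).preimage_interior,
    interior_pi_set Set.finite_univ]
  simp [PiLp.homeomorph]
  norm_num

lemma measurable_indicator_unitCube : Measurable ((unitCube d).indicator (1 : Euc d → ℝ≥0∞)) :=
  measurable_one.indicator measurableSet_unitCube

lemma lintegral_indicator_unitCube_add (z : Euc d) :
    ∫⁻ u, (unitCube d).indicator 1 (z + u) = 1 := by
  rw [lintegral_add_left_eq_self (fun u => (unitCube d).indicator 1 u),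
    lintegral_indicator_one measurableSet_unitCube, volume_unitCube]

lemma eq_measure_unitCube_smul_volume (μ : Measure (Euc d)) [μ.IsAddLeftInvariant]
    (h : μ (unitCube d) ≠ ∞) : μ = μ (unitCube d) • volume := by
  -- `μ + volume` is a Haar measure, so `μ` is finite on compacts and Haar uniqueness applies.
  have : (μ + volume).IsAddLeftInvariant := ⟨fun t => by
    rw [Measure.map_add _ _ (measurable_const_add t), map_add_left_eq_self, map_add_left_eq_self]⟩
  have : (μ + volume).IsAddHaarMeasure :=
    Measure.isAddHaarMeasure_of_isCompact_nonempty_interior _ _ isCompact_unitCube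
      interior_unitCube_nonempty (by simp [volume_unitCube]) (by simp [h, volume_unitCube])
  have : IsFiniteMeasureOnCompacts μ :=
    ⟨fun K hK => (le_self_add : μ K ≤ μ K + volume K).trans_lt
      (hK.measure_lt_top (μ := μ + volume))⟩
  have hμ := Measure.isAddLeftInvariant_eq_smul μ volume
  set c := μ.addHaarScalarFactor volume
  clear_value c
  rw [hμ, Measure.smul_apply, volume_unitCube]
  ext s hs
  rw [Measure.smul_apply, Measure.smul_apply, Measure.nnreal_smul_coe_apply,
    ENNReal.smul_def c 1, smul_eq_mul, smul_eq_mul, mul_one]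

end UnitCube

namespace ProbabilityTheory.Kernel

open Function

variable {α β : Type*} [MeasurableSpace α] [MeasurableSpace β] {κ : Kernel α β}

lemma isSFiniteKernel_of_isFiniteMeasure (h : ∀ a, IsFiniteMeasure (κ a)) :
    IsSFiniteKernel κ := by
  classical
  have hmass : Measurable fun a => ⌊(κ a univ).toReal⌋₊ :=
    (κ.measurable_coe MeasurableSet.univ).ennreal_toReal.nat_floor
  let piece (m : ℕ) : Kernel α β := piecewise (hmass (measurableSet_singleton m)) κ 0
  have hpiece (m : ℕ) : IsFiniteKernel (piece m) := by
    refine ⟨m + 1, ENNReal.add_lt_top.2 ⟨ENNReal.natCast_lt_top m, ENNReal.one_lt_top⟩,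
      fun a => ?_⟩
    rw [piecewise_apply']
    split_ifs with ha
    · have hlt := Nat.lt_floor_add_one (κ a univ).toReal
      rw [show ⌊(κ a univ).toReal⌋₊ = m from ha] at hlt
      calc κ a univ = ENNReal.ofReal (κ a univ).toReal :=
            (ENNReal.ofReal_toReal (measure_ne_top _ _)).symm
        _ ≤ ENNReal.ofReal (m + 1) := ENNReal.ofReal_le_ofReal hlt.le
        _ = m + 1 := by rw [ENNReal.ofReal_add (by positivity) zero_le_one]; simp
    · simp
  have hsum : κ = Kernel.sum piece := by
    refine ext fun a => Measure.ext fun s hs => ?_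
    simp [piece, sum_apply' _ _ hs, piecewise_apply']
  rw [hsum]
  exact isSFiniteKernel_sum (hκs := fun m => inferInstance)

lemma isSFiniteKernel_of_restrict {s : ℕ → Set β} (hs : ∀ n, MeasurableSet (s n))
    (hd : Pairwise (Disjoint on s)) (hcov : ⋃ n, s n = univ)
    (h : ∀ n, IsSFiniteKernel (κ.restrict (hs n))) : IsSFiniteKernel κ := by
  have hsum : κ = Kernel.sum fun n => κ.restrict (hs n) := by
    refine ext fun a => ?_
    rw [sum_apply, ← Measure.restrict_univ (μ := κ a), ← hcov, Measure.restrict_iUnion hd hs]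
    rfl
  rw [hsum]
  exact isSFiniteKernel_sum (hκs := h)

lemma isSFiniteKernel_of_isLocallyFiniteMeasure [TopologicalSpace β] [SigmaCompactSpace β]
    [T2Space β] [OpensMeasurableSpace β] (h : ∀ a, IsLocallyFiniteMeasure (κ a)) :
    IsSFiniteKernel κ := by
  have hs (n : ℕ) : MeasurableSet (disjointed (compactCovering β) n) :=
    MeasurableSet.disjointed (fun k => (isCompact_compactCovering β k).measurableSet) n
  refine isSFiniteKernel_of_restrict hs (disjoint_disjointed _)
    (by rw [iUnion_disjointed, iUnion_compactCovering]) fun n => ?_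
  refine isSFiniteKernel_of_isFiniteMeasure fun a => ⟨?_⟩
  rw [restrict_apply, Measure.restrict_apply_univ]
  exact (measure_mono (disjointed_subset _ n)).trans_lt
    (isCompact_compactCovering β n).measure_lt_top

end ProbabilityTheory.Kernel

section Invariance

variable {d : ℕ} {Ω : Type*} {θ : Euc d → Ω → Ω}
  {Φ : Ω → Measure (Euc d)} {K : Ω → Euc d → Measure (Euc d)}

lemma InvariantRM.apply_eq_map (hΦ : InvariantRM θ Φ) (x : Euc d) (ω : Ω) :
    Φ (θ x ω) = (Φ ω).map (· - x) := by
  ext s hs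
  rw [Measure.map_apply (measurable_sub_const x) hs]
  exact hΦ ω x s hs

variable [MeasurableSpace Ω]

lemma IsFlow.measurable_apply (hθ : IsFlow θ) (x : Euc d) : Measurable (θ x) :=
  hθ.1.comp measurable_prodMk_left

lemma IsFlow.measurable_orbit (hθ : IsFlow θ) (ω : Ω) : Measurable fun x => θ x ω :=
  hθ.1.comp measurable_prodMk_right

lemma IsFlow.apply_apply (hθ : IsFlow θ) (x y : Euc d) (ω : Ω) :
    θ x (θ y ω) = θ (x + y) ω :=
  congrFun (hθ.2.2 x y) ω

lemma IsInvariantKernel.measurable_apply (hK : IsInvariantKernel θ K) (ω : Ω) :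
    Measurable (K ω) :=
  hK.1.comp measurable_prodMk_left

lemma IsInvariantKernel.apply_eq_map (hK : IsInvariantKernel θ K) (ω : Ω) (x : Euc d) :
    K ω x = (K (θ x ω) 0).map (· + x) := by
  ext s hs
  rw [Measure.map_apply (measurable_add_const x) hs,
    ← hK.2.2 ω x _ (measurable_add_const x hs)]
  congr 1
  ext y
  simp

lemma IsInvariantKernel.apply_preimage_sub (hθ : IsFlow θ) (hK : IsInvariantKernel θ K)
    (ω : Ω) (u v : Euc d) {s : Set (Euc d)} (hs : MeasurableSet s) :
    K ω v ((· - u) ⁻¹' s) = K (θ u ω) (v - u) s := by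
  rw [hK.apply_eq_map ω v, hK.apply_eq_map (θ u ω) (v - u), hθ.apply_apply, sub_add_cancel,
    Measure.map_apply (measurable_add_const v) (measurable_sub_const u hs),
    Measure.map_apply (measurable_add_const (v - u)) hs]
  congr 1
  ext z
  simp [add_sub_assoc]

end Invariance

lemma tconv_apply {d : ℕ} (μ ν : Measure (Euc d)) [SFinite μ] [SFinite ν] {B : Set (Euc d)}
    (hB : MeasurableSet B) : tconv μ ν B = ∫⁻ z, μ ((· - z) ⁻¹' B) ∂ν := by
  have hsub : Measurable fun p : Euc d × Euc d => p.1 - p.2 :=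
    measurable_fst.sub measurable_snd
  rw [tconv, Measure.map_apply hsub hB, Measure.prod_apply_symm (hsub hB)]
  rfl

section SecondMoment

variable {d : ℕ} {Ω : Type*} [MeasurableSpace Ω] {θ : Euc d → Ω → Ω}
  {K : Ω → Euc d → Measure (Euc d)} {B : Set (Euc d)}

def IsInvariantKernel.toKernel (hK : IsInvariantKernel θ K) : Kernel (Ω × Euc d) (Euc d) :=
  ⟨fun p => K p.1 p.2, hK.1⟩

instance IsInvariantKernel.isMarkovKernel_toKernel (hK : IsInvariantKernel θ K) :
    IsMarkovKernel hK.toKernel :=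
  ⟨fun p => hK.2.1 p.1 p.2⟩

lemma IsInvariantKernel.measurable_apply_preimage_sub (hK : IsInvariantKernel θ K)
    {X : Type*} [MeasurableSpace X] {σ : X → Ω} {τ ρ : X → Euc d} (hσ : Measurable σ)
    (hτ : Measurable τ) (hρ : Measurable ρ) (hB : MeasurableSet B) :
    Measurable fun x => K (σ x) (τ x) ((· - ρ x) ⁻¹' B) :=
  (hK.toKernel.comap _ (hσ.prodMk hτ)).measurable_kernel_prodMk_left
    ((measurable_snd.sub (hρ.comp measurable_fst)) hB)

def secondMomentIntegrand (K : Ω → Euc d → Measure (Euc d)) (B : Set (Euc d)) (u y : Euc d)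
    (ω : Ω) : ℝ≥0∞ :=
  ∫⁻ z, (unitCube d).indicator 1 (z + u) * K ω y ((· - z) ⁻¹' B) ∂K ω 0

lemma measurable_secondMomentIntegrand (hK : IsInvariantKernel θ K) (hB : MeasurableSet B) :
    Measurable fun p : Euc d × Euc d × Ω => secondMomentIntegrand K B p.1 p.2.1 p.2.2 := by
  refine Measurable.lintegral_kernel_prod_right
    (κ := hK.toKernel.comap (fun p : Euc d × Euc d × Ω => (p.2.2, 0)) (by fun_prop)) ?_
  exact (measurable_indicator_unitCube.comp (measurable_snd.add measurable_fst.fst)).mul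
    (hK.measurable_apply_preimage_sub measurable_fst.snd.snd measurable_fst.snd.fst
      measurable_snd hB)

lemma lintegral_secondMomentIntegrand (hK : IsInvariantKernel θ K) (hB : MeasurableSet B)
    (y : Euc d) (ω : Ω) :
    ∫⁻ u, secondMomentIntegrand K B u y ω = tconv (K ω y) (K ω 0) B := by
  have := hK.2.1 ω y
  have := hK.2.1 ω 0
  simp only [secondMomentIntegrand]
  rw [tconv_apply _ _ hB, lintegral_lintegral_swap]
  · refine lintegral_congr fun z => ?_
    rw [lintegral_mul_const _ (f := fun u => (unitCube d).indicator 1 (z + u))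
      (measurable_indicator_unitCube.comp (measurable_const_add z)),
      lintegral_indicator_unitCube_add, one_mul]
  · exact ((measurable_indicator_unitCube.comp (measurable_snd.add measurable_fst)).mul
      (hK.measurable_apply_preimage_sub measurable_const measurable_const measurable_snd
        hB)).aemeasurable

lemma setLIntegral_bind_preimage_sub (hθ : IsFlow θ) (hK : IsInvariantKernel θ K) (ω : Ω)
    (μ : Measure (Euc d)) [SFinite μ] (hB : MeasurableSet B) :
    ∫⁻ x in unitCube d, μ.bind (K ω) ((· - x) ⁻¹' B) ∂μ.bind (K ω)
      = ∫⁻ u, ∫⁻ v, secondMomentIntegrand K B u (v - u) (θ u ω) ∂μ ∂μ := by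
  set g : Euc d → ℝ≥0∞ := fun x => μ.bind (K ω) ((· - x) ⁻¹' B)
  have hbind (x : Euc d) : g x = ∫⁻ v, K ω v ((· - x) ⁻¹' B) ∂μ :=
    Measure.bind_apply (measurable_sub_const x hB) (hK.measurable_apply ω).aemeasurable
  have hg : Measurable g := by
    rw [show g = _ from funext hbind]
    exact (hK.measurable_apply_preimage_sub measurable_const measurable_snd measurable_fst
      hB).lintegral_prod_right'
  have hgC : Measurable ((unitCube d).indicator g) := hg.indicator measurableSet_unitCube
  rw [← lintegral_indicator measurableSet_unitCube,
    Measure.lintegral_bind (hK.measurable_apply ω).aemeasurable hgC.aemeasurable]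
  refine lintegral_congr fun u => ?_
  have := hK.2.1 (θ u ω) 0
  simp only [secondMomentIntegrand]
  rw [hK.apply_eq_map ω u, lintegral_map hgC (measurable_add_const u), lintegral_lintegral_swap]
  · refine lintegral_congr fun z => ?_
    have hind : (unitCube d).indicator g (z + u) = (unitCube d).indicator 1 (z + u) * g (z + u)
        ∧ (unitCube d).indicator 1 (z + u) ≠ ∞ := by
      by_cases h : z + u ∈ unitCube d <;> simp [h]
    rw [hind.1, lintegral_const_mul' _ _ hind.2, hbind]
    congr 1
    refine lintegral_congr fun v => ?_
    rw [← hK.apply_preimage_sub hθ ω u v (measurable_sub_const z hB), Set.preimage_preimage]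
    simp_rw [sub_sub, add_comm u z]
  · exact ((measurable_indicator_unitCube.comp (measurable_snd.add measurable_const)).mul
      (hK.measurable_apply_preimage_sub measurable_const (measurable_fst.sub measurable_const)
        measurable_snd hB)).aemeasurable

end SecondMoment

section Campbell

variable {d : ℕ} {Ω : Type*} [MeasurableSpace Ω] {P : Measure Ω} {θ : Euc d → Ω → Ω}
  {Φ : Ω → Measure (Euc d)}

def campbellMeasure (P : Measure Ω) (θ : Euc d → Ω → Ω) (Φ : Ω → Measure (Euc d)) :
    Measure (Ω × Euc d) :=
  P.bind fun ω => (Φ ω).map fun u => (θ u ω, u)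

variable (hθ : IsFlow θ) (hΦm : Measurable Φ) (hΦlf : ∀ ω, IsLocallyFiniteMeasure (Φ ω))
include hθ hΦm hΦlf

lemma measurable_map_orbit :
    Measurable fun ω => (Φ ω).map fun u => (θ u ω, u) := by
  have := Kernel.isSFiniteKernel_of_isLocallyFiniteMeasure (κ := ⟨Φ, hΦm⟩) hΦlf
  refine Measure.measurable_of_measurable_coe _ fun s hs => ?_
  simp_rw [Measure.map_apply ((hθ.measurable_orbit _).prodMk measurable_id') hs]
  exact (⟨Φ, hΦm⟩ : Kernel Ω (Euc d)).measurable_kernel_prodMk_left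
    ((hθ.1.comp measurable_swap).prodMk measurable_snd hs)

lemma campbellMeasure_prod {A : Set Ω} (hA : MeasurableSet A) {D : Set (Euc d)}
    (hD : MeasurableSet D) :
    campbellMeasure P θ Φ (A ×ˢ D) = ∫⁻ ω, Φ ω ({u | θ u ω ∈ A} ∩ D) ∂P := by
  rw [campbellMeasure, Measure.bind_apply (hA.prod hD)
    (measurable_map_orbit hθ hΦm hΦlf).aemeasurable]
  refine lintegral_congr fun ω => ?_
  rw [Measure.map_apply ((hθ.measurable_orbit ω).prodMk measurable_id') (hA.prod hD)]
  rfl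

lemma lintegral_campbellMeasure {F : Ω × Euc d → ℝ≥0∞} (hF : Measurable F) :
    ∫⁻ p, F p ∂campbellMeasure P θ Φ = ∫⁻ ω, ∫⁻ u, F (θ u ω, u) ∂Φ ω ∂P := by
  rw [campbellMeasure, Measure.lintegral_bind (measurable_map_orbit hθ hΦm hΦlf).aemeasurable
    hF.aemeasurable]
  refine lintegral_congr fun ω => ?_
  rw [lintegral_map hF ((hθ.measurable_orbit ω).prodMk measurable_id')]

lemma campbellMeasure_prod_preimage_sub (hPθ : ∀ x, P.map (θ x) = P)
    (hΦinv : InvariantRM θ Φ)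
    {A : Set Ω} (hA : MeasurableSet A) {D : Set (Euc d)} (hD : MeasurableSet D) (t : Euc d) :
    campbellMeasure P θ Φ (A ×ˢ ((· - t) ⁻¹' D)) = campbellMeasure P θ Φ (A ×ˢ D) := by
  have hsec : Measurable fun ω => Φ ω ({u | θ u ω ∈ A} ∩ D) := by
    have := Kernel.isSFiniteKernel_of_isLocallyFiniteMeasure (κ := ⟨Φ, hΦm⟩) hΦlf
    exact (⟨Φ, hΦm⟩ : Kernel Ω (Euc d)).measurable_kernel_prodMk_left
      (((hθ.1.comp measurable_swap) hA).inter (measurable_snd hD))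
  rw [campbellMeasure_prod hθ hΦm hΦlf hA (measurable_sub_const t hD),
    campbellMeasure_prod hθ hΦm hΦlf hA hD]
  conv_rhs => rw [← hPθ t, lintegral_map hsec (hθ.measurable_apply t)]
  refine lintegral_congr fun ω => ?_
  rw [hΦinv.apply_eq_map, Measure.map_apply (s := {u | θ u (θ t ω) ∈ A} ∩ D)
    (measurable_sub_const t) ((hθ.measurable_orbit (θ t ω) hA).inter hD)]
  congr 1
  ext v
  simp [hθ.apply_apply]

lemma campbellMeasure_prod_unitCube {γ : ℝ≥0∞} {P0 : Measure Ω} (hP0 : IsPalm P θ Φ γ P0)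
    {A : Set Ω} (hA : MeasurableSet A) :
    campbellMeasure P θ Φ (A ×ˢ unitCube d) = γ * P0 A := by
  rw [campbellMeasure_prod hθ hΦm hΦlf hA measurableSet_unitCube, hP0.2 A hA]
  refine lintegral_congr fun ω => ?_
  have hpre : MeasurableSet {u | θ u ω ∈ A} := (hθ.measurable_orbit ω) hA
  rw [← Measure.restrict_apply' measurableSet_unitCube, ← lintegral_indicator_one hpre]
  rfl

variable {γ : ℝ≥0∞} {P0 : Measure Ω}

lemma campbellMeasure_prod_eq_mul (hPθ : ∀ x, P.map (θ x) = P) (hΦinv : InvariantRM θ Φ)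
    (hγfin : γ < ⊤) (hP0 : IsPalm P θ Φ γ P0) {A : Set Ω} (hA : MeasurableSet A)
    {D : Set (Euc d)} (hD : MeasurableSet D) :
    campbellMeasure P θ Φ (A ×ˢ D) = γ * P0 A * volume D := by
  have := hP0.1
  set m := campbellMeasure P θ Φ
  let μ : Measure (Euc d) := (m.restrict (A ×ˢ univ)).snd
  have hμ {D : Set (Euc d)} (hD : MeasurableSet D) : μ D = m (A ×ˢ D) := by
    rw [Measure.snd_apply hD, Measure.restrict_apply (measurable_snd hD)]
    congr 1
    ext p
    simp [and_comm]
  have : μ.IsAddLeftInvariant := ⟨fun t => by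
    ext D hD
    rw [Measure.map_apply (measurable_const_add t) hD, hμ (measurable_const_add t hD), hμ hD,
      ← campbellMeasure_prod_preimage_sub hθ hΦm hΦlf hPθ hΦinv hA hD (-t)]
    congr 2
    ext u
    simp [add_comm]⟩
  have hfin : μ (unitCube d) ≠ ∞ := by
    refine ne_top_of_le_ne_top ?_ ((hμ measurableSet_unitCube).trans_le
      (measure_mono (prod_mono (subset_univ A) subset_rfl)))
    rw [campbellMeasure_prod_unitCube hθ hΦm hΦlf hP0 MeasurableSet.univ, measure_univ, mul_one]
    exact hγfin.ne
  rw [← hμ hD, eq_measure_unitCube_smul_volume μ hfin, Measure.smul_apply,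
    hμ measurableSet_unitCube, campbellMeasure_prod_unitCube hθ hΦm hΦlf hP0 hA, smul_eq_mul]

lemma campbellMeasure_eq (hPθ : ∀ x, P.map (θ x) = P) (hΦinv : InvariantRM θ Φ)
    (hγfin : γ < ⊤) (hP0 : IsPalm P θ Φ γ P0) :
    campbellMeasure P θ Φ = (γ • P0).prod volume := by
  have := hP0.1
  have : IsFiniteMeasure (γ • P0) := ⟨by simpa using hγfin⟩
  refine (Measure.prod_eq fun A D hA hD => ?_).symm
  rw [Measure.smul_apply, smul_eq_mul,
    campbellMeasure_prod_eq_mul hθ hΦm hΦlf hPθ hΦinv hγfin hP0 hA hD]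

theorem lintegral_refined_campbell (hPθ : ∀ x, P.map (θ x) = P) (hΦinv : InvariantRM θ Φ)
    (hγfin : γ < ⊤) (hP0 : IsPalm P θ Φ γ P0) {F : Ω → Euc d → ℝ≥0∞}
    (hF : Measurable (Function.uncurry F)) :
    ∫⁻ ω, ∫⁻ u, F (θ u ω) u ∂Φ ω ∂P = γ * ∫⁻ ω, ∫⁻ u, F ω u ∂volume ∂P0 := by
  refine (lintegral_campbellMeasure hθ hΦm hΦlf hF).symm.trans ?_
  rw [campbellMeasure_eq hθ hΦm hΦlf hPθ hΦinv hγfin hP0, lintegral_prod _ hF.aemeasurable,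
    lintegral_smul_measure, smul_eq_mul]
  rfl

end Campbell

lemma IsReducedSecondMoment.isLocallyFiniteMeasure {d : ℕ} {Ω : Type*} [MeasurableSpace Ω]
    {P : Measure Ω} {Φ : Ω → Measure (Euc d)} {α : Measure (Euc d)} (hsq : LocSqInt P Φ)
    (hα : IsReducedSecondMoment P Φ α) : IsLocallyFiniteMeasure α := by
  obtain ⟨r, hr⟩ := isCompact_unitCube.isBounded.subset_closedBall (0 : Euc d)
  refine ⟨fun x => ⟨Metric.closedBall x 1, Metric.closedBall_mem_nhds x one_pos, ?_⟩⟩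
  set S := Metric.closedBall (0 : Euc d) (‖x‖ + 1 + r)
  have hrS (y : Euc d) (hy : y ∈ unitCube d) {w : Euc d} (hw : ‖w‖ ≤ ‖x‖ + 1) :
      w + y ∈ S := by
    have hy' : ‖y‖ ≤ r := by simpa using hr hy
    rw [mem_closedBall_zero_iff]
    linarith [norm_add_le w y]
  have hCS : unitCube d ⊆ S := fun y hy => by
    simpa using hrS y hy (w := 0) (by rw [norm_zero]; positivity)
  have hshift (y : Euc d) (hy : y ∈ unitCube d) :
      (· - y) ⁻¹' Metric.closedBall x 1 ⊆ S := by
    intro w hw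
    rw [mem_preimage, mem_closedBall_iff_norm] at hw
    simpa using hrS y hy (w := w - y) (by linarith [norm_le_norm_add_norm_sub' (w - y) x])
  rw [hα _ Metric.isClosed_closedBall.measurableSet]
  refine lt_of_le_of_lt (lintegral_mono fun ω => ?_)
    (hsq S Metric.isClosed_closedBall.measurableSet Metric.isBounded_closedBall)
  calc ∫⁻ y in unitCube d, Φ ω ((· - y) ⁻¹' Metric.closedBall x 1) ∂Φ ω
      ≤ ∫⁻ _ in unitCube d, Φ ω S ∂Φ ω :=
        setLIntegral_mono measurable_const fun y hy => measure_mono (hshift y hy)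
    _ = Φ ω S * Φ ω (unitCube d) := setLIntegral_const _ _
    _ ≤ Φ ω S ^ 2 := by rw [sq]; exact mul_le_mul_right (measure_mono hCS) _

section Transport

variable {d : ℕ} {Ω : Type*} [MeasurableSpace Ω] {P : Measure Ω} {θ : Euc d → Ω → Ω}
  {Φ : Ω → Measure (Euc d)} {K : Ω → Euc d → Measure (Euc d)} {αK : Measure (Euc d)}
  {B : Set (Euc d)}

lemma IsReducedSecondMoment.transported_apply (hθ : IsFlow θ)
    (hΦlf : ∀ ω, IsLocallyFiniteMeasure (Φ ω)) (hK : IsInvariantKernel θ K)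
    (hαK : IsReducedSecondMoment P (transported K Φ) αK) (hB : MeasurableSet B) :
    αK B = ∫⁻ ω, ∫⁻ u, ∫⁻ v, secondMomentIntegrand K B u (v - u) (θ u ω) ∂Φ ω ∂Φ ω ∂P := by
  rw [hαK B hB]
  refine lintegral_congr fun ω => ?_
  have := hΦlf ω
  exact setLIntegral_bind_preimage_sub hθ hK ω (Φ ω) hB

lemma IsReducedSecondMoment.transported_apply_eq_palm (hθ : IsFlow θ)
    (hPθ : ∀ x, P.map (θ x) = P) (hΦm : Measurable Φ)
    (hΦlf : ∀ ω, IsLocallyFiniteMeasure (Φ ω)) (hΦinv : InvariantRM θ Φ) {γ : ℝ≥0∞}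
    (hγfin : γ < ⊤) {P0 : Measure Ω} (hP0 : IsPalm P θ Φ γ P0) (hK : IsInvariantKernel θ K)
    (hαK : IsReducedSecondMoment P (transported K Φ) αK) (hB : MeasurableSet B) :
    αK B = γ * ∫⁻ ω, ∫⁻ y, tconv (K ω y) (K ω 0) B ∂Φ ω ∂P0 := by
  have := Kernel.isSFiniteKernel_of_isLocallyFiniteMeasure (κ := ⟨Φ, hΦm⟩) hΦlf
  have hf := measurable_secondMomentIntegrand hK hB
  set F : Ω → Euc d → ℝ≥0∞ := fun ω u => ∫⁻ v, secondMomentIntegrand K B u v ω ∂Φ ω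
  have hF : Measurable (Function.uncurry F) :=
    Measurable.lintegral_kernel_prod_right
      (κ := (⟨Φ, hΦm⟩ : Kernel Ω (Euc d)).comap Prod.fst measurable_fst)
      (hf.comp (measurable_fst.snd.prodMk (measurable_snd.prodMk measurable_fst.fst)))
  have hFθ (ω : Ω) (u : Euc d) :
      F (θ u ω) u = ∫⁻ v, secondMomentIntegrand K B u (v - u) (θ u ω) ∂Φ ω := by
    change ∫⁻ v, _ ∂Φ (θ u ω) = _
    rw [hΦinv.apply_eq_map, lintegral_map _ (measurable_sub_const u)]
    exact hf.comp (measurable_const.prodMk (measurable_id.prodMk measurable_const))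
  simp_rw [hαK.transported_apply hθ hΦlf hK hB, ← hFθ,
    lintegral_refined_campbell hθ hΦm hΦlf hPθ hΦinv hγfin hP0 hF]
  congr 1
  refine lintegral_congr fun ω => ?_
  have := hΦlf ω
  rw [lintegral_lintegral_swap (f := fun u v => secondMomentIntegrand K B u v ω)
    (hf.comp (measurable_fst.prodMk (measurable_snd.prodMk measurable_const))).aemeasurable]
  exact lintegral_congr fun y => lintegral_secondMomentIntegrand hK hB y ω

lemma IsReducedSecondMoment.transported_apply_eq_twoPointPalm (hθ : IsFlow θ)
    (hΦlf : ∀ ω, IsLocallyFiniteMeasure (Φ ω)) (hK : IsInvariantKernel θ K)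
    (hαK : IsReducedSecondMoment P (transported K Φ) αK) (hsq : LocSqInt P Φ)
    {α : Measure (Euc d)} (hα : IsReducedSecondMoment P Φ α) {P2 : Euc d → Measure Ω}
    (hP2 : IsTwoPointPalm P θ Φ α P2) (hB : MeasurableSet B) :
    αK B = ∫⁻ y, ∫⁻ ω, tconv (K ω y) (K ω 0) B ∂P2 y ∂α := by
  have := hα.isLocallyFiniteMeasure hsq
  let κ : Kernel (Euc d × Euc d) Ω := ⟨fun q => P2 q.2, hP2.2.1.comp measurable_snd⟩
  have : IsMarkovKernel κ := ⟨fun q => hP2.1 q.2⟩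
  have hf := measurable_secondMomentIntegrand hK hB
  rw [hαK.transported_apply hθ hΦlf hK hB, hP2.2.2 _ hf, lintegral_lintegral_swap
    (Measurable.lintegral_kernel_prod_right (κ := κ)
      (f := fun q ω => secondMomentIntegrand K B q.1 q.2 ω)
      (hf.comp (measurable_fst.fst.prodMk
        (measurable_fst.snd.prodMk measurable_snd)))).aemeasurable]
  refine lintegral_congr fun y => ?_
  have := hP2.1 y
  rw [lintegral_lintegral_swap (f := fun u ω => secondMomentIntegrand K B u y ω)
    (hf.comp (measurable_fst.prodMk (measurable_const.prodMk measurable_snd))).aemeasurable]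
  exact lintegral_congr fun ω => lintegral_secondMomentIntegrand hK hB y ω

end Transport

theorem reduced_second_moment_of_transport_general
    {d : ℕ} {Ω : Type} [MeasurableSpace Ω]
    (P : Measure Ω)
    (θ : Euc d → Ω → Ω) (hθ : IsFlow θ)
    (hPθ : ∀ x : Euc d, Measure.map (θ x) P = P)
    (Φ : Ω → Measure (Euc d)) (hΦm : Measurable Φ)
    (hΦlf : ∀ ω, IsLocallyFiniteMeasure (Φ ω))
    (hΦinv : InvariantRM θ Φ)
    (γ : ℝ≥0∞) (hγfin : γ < ⊤)
    (P0 : Measure Ω) (hP0 : IsPalm P θ Φ γ P0)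
    (K : Ω → Euc d → Measure (Euc d)) (hK : IsInvariantKernel θ K)
    (αK : Measure (Euc d)) (hαK : IsReducedSecondMoment P (transported K Φ) αK) :
    (∀ B : Set (Euc d), MeasurableSet B →
        αK B = γ * ∫⁻ ω, ∫⁻ y, tconv (K ω y) (K ω 0) B ∂(Φ ω) ∂P0) ∧
    (LocSqInt P Φ →
      ∀ α : Measure (Euc d), IsReducedSecondMoment P Φ α →
      ∀ P2 : Euc d → Measure Ω, IsTwoPointPalm P θ Φ α P2 →
      ∀ B : Set (Euc d), MeasurableSet B →
        αK B = ∫⁻ y, ∫⁻ ω, tconv (K ω y) (K ω 0) B ∂(P2 y) ∂α) :=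
  ⟨fun _ hB => hαK.transported_apply_eq_palm hθ hPθ hΦm hΦlf hΦinv hγfin hP0 hK hB,
    fun hsq _ hα _ hP2 _ hB =>
      hαK.transported_apply_eq_twoPointPalm hθ hΦlf hK hsq hα hP2 hB⟩

/-- Lemma: Palm representations of the reduced second moment measure of a transported
random measure. -/
theorem reduced_second_moment_of_transport
    {d : ℕ} {Ω : Type} [MeasurableSpace Ω]
    (P : Measure Ω) [IsProbabilityMeasure P]
    (θ : Euc d → Ω → Ω) (hθ : IsFlow θ)
    (hPθ : ∀ x : Euc d, Measure.map (θ x) P = P)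
    (Φ : Ω → Measure (Euc d)) (hΦm : Measurable Φ)
    (hΦlf : ∀ ω, IsLocallyFiniteMeasure (Φ ω))
    (hΦinv : InvariantRM θ Φ)
    (γ : ℝ≥0∞) (hγ0 : 0 < γ) (hγfin : γ < ⊤) (hγ : HasIntensity P Φ γ)
    (P0 : Measure Ω) (hP0 : IsPalm P θ Φ γ P0)
    (K : Ω → Euc d → Measure (Euc d)) (hK : IsInvariantKernel θ K)
    (αK : Measure (Euc d)) (hαK : IsReducedSecondMoment P (transported K Φ) αK) :
    (∀ B : Set (Euc d), MeasurableSet B →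
        αK B = γ * ∫⁻ ω, ∫⁻ y, tconv (K ω y) (K ω 0) B ∂(Φ ω) ∂P0) ∧
    (LocSqInt P Φ →
      ∀ α : Measure (Euc d), IsReducedSecondMoment P Φ α →
      ∀ P2 : Euc d → Measure Ω, IsTwoPointPalm P θ Φ α P2 →
      ∀ B : Set (Euc d), MeasurableSet B →
        αK B = ∫⁻ y, ∫⁻ ω, tconv (K ω y) (K ω 0) B ∂(P2 y) ∂α) :=
  reduced_second_moment_of_transport_general P θ hθ hPθ Φ hΦm hΦlf hΦinv γ hγfin P0 hP0 K hK αK hαK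
end
end

section
/- Let Φ be a stationary, locally square-integrable random measure on ℝ^d and let L₀ be a Borel probability measure on ℝ^d. Define the smoothed random measure LΦ by LΦ(ω, B) := ∫ Φ(ω, B − y) L₀(dy) for Borel sets B. Then for every bounded Borel set B ⊆ ℝ^d, Var[LΦ(B)] ≤ Var[Φ(B)]. -/
open MeasureTheory Filter Set ProbabilityTheory
open scoped ENNReal NNReal Topology Pointwise

noncomputable section

/-! For fixed `B`, `LΦ(B)(ω) = ∫ Φ(ω, B - y) L₀(dy)` is an `L₀`-average of the random variables
`Φ(B - y)`, each distributed as `Φ(B)` by stationarity. Fubini therefore gives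
`E[LΦ(B)] = E[Φ(B)]`, while Jensen's inequality `(∫ f dL₀)² ≤ ∫ f² dL₀`, applied for each `ω`
before using Fubini, gives `E[LΦ(B)²] ≤ E[Φ(B)²]`. -/

theorem measurable_measure_prodMk_left_of_isLocallyFiniteMeasure {α β : Type*}
    [MeasurableSpace α] [TopologicalSpace β] [MeasurableSpace β] [OpensMeasurableSpace β]
    [T2Space β] [SigmaCompactSpace β] {μ : α → Measure β} (hμ : Measurable μ)
    (hμlf : ∀ a, IsLocallyFiniteMeasure (μ a)) {t : Set (α × β)} (ht : MeasurableSet t) :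
    Measurable fun a => μ a (Prod.mk a ⁻¹' t) := by
  have hK : ∀ n, MeasurableSet (compactCovering β n) := fun n =>
    (isCompact_compactCovering β n).measurableSet
  have hrestrict : ∀ n, Measurable fun a => (μ a).restrict (compactCovering β n) := fun n =>
    Measure.measurable_of_measurable_coe _ fun s hs => by
      simp_rw [Measure.restrict_apply hs]
      exact (Measure.measurable_coe (hs.inter (hK n))).comp hμ
  have hfinite : ∀ n,
      Measurable fun a => (μ a).restrict (compactCovering β n) (Prod.mk a ⁻¹' t) := fun n =>
    Kernel.measurable_kernel_prodMk_left_of_finite (κ := ⟨_, hrestrict n⟩) ht fun a =>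
      isFiniteMeasure_restrict.2 (isCompact_compactCovering β n).measure_lt_top.ne
  have hsup : ∀ a, μ a (Prod.mk a ⁻¹' t) =
      ⨆ n, (μ a).restrict (compactCovering β n) (Prod.mk a ⁻¹' t) := fun a => by
    rw [← Measure.restrict_iUnion_apply_eq_iSup
      (monotone_nat_of_le_succ fun n => compactCovering_subset β n.le_succ).directed_le
      (measurable_prodMk_left ht), iUnion_compactCovering, Measure.restrict_univ]
  simp_rw [hsup]
  exact .iSup hfinite

theorem bind_map_add_right_apply {G : Type*} [MeasurableSpace G] [Add G] [MeasurableAdd₂ G]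
    (μ : Measure G) [SFinite μ] (ν : Measure G) {B : Set G} (hB : MeasurableSet B) :
    (ν.bind fun y => μ.map (· + y)) B = ∫⁻ y, μ ((· + y) ⁻¹' B) ∂ν := by
  have hmeas : Measurable fun y => μ.map (· + y) :=
    Measure.measurable_of_measurable_coe _ fun s hs => by
      simp_rw [Measure.map_apply (measurable_add_const _) hs]
      exact measurable_measure_prodMk_left ((measurable_snd.add measurable_fst) hs)
  rw [Measure.bind_apply hB hmeas.aemeasurable]
  simp_rw [Measure.map_apply (measurable_add_const _) hB]

theorem sq_lintegral_le_lintegral_sq {α : Type*} [MeasurableSpace α] {μ : Measure α}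
    [IsProbabilityMeasure μ] {f : α → ℝ≥0∞} (hf : AEMeasurable f μ) :
    (∫⁻ x, f x ∂μ) ^ 2 ≤ ∫⁻ x, f x ^ 2 ∂μ := by
  have hHolder := ENNReal.lintegral_mul_le_Lp_mul_Lq μ Real.HolderConjugate.two_two hf
    aemeasurable_const (g := fun _ => 1)
  simp only [mul_one, ENNReal.one_rpow, lintegral_const, measure_univ] at hHolder
  calc (∫⁻ x, f x ∂μ) ^ 2 ≤ ((∫⁻ x, f x ^ (2 : ℝ) ∂μ) ^ (1 / 2 : ℝ)) ^ 2 := by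
        gcongr; simpa using hHolder
    _ = ∫⁻ x, f x ^ 2 ∂μ := by
        rw [← ENNReal.rpow_natCast, ← ENNReal.rpow_mul]; norm_num

section Averaging

variable {Ω ι : Type*} [MeasurableSpace Ω] [MeasurableSpace ι] {P : Measure Ω} [SFinite P]
  {ν : Measure ι} [IsProbabilityMeasure ν] {F : Ω → ι → ℝ≥0∞} {X : Ω → ℝ≥0∞}

theorem lintegral_lintegral_comp_eq_of_identDistrib (hF : Measurable (Function.uncurry F))
    (hX : ∀ y, IdentDistrib (fun ω => F ω y) X P P) {g : ℝ≥0∞ → ℝ≥0∞} (hg : Measurable g) :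
    ∫⁻ ω, ∫⁻ y, g (F ω y) ∂ν ∂P = ∫⁻ ω, g (X ω) ∂P := by
  rw [lintegral_lintegral_swap (f := fun ω y => g (F ω y)) (hg.comp hF).aemeasurable]
  have hsection : ∀ y, ∫⁻ ω, g (F ω y) ∂P = ∫⁻ ω, g (X ω) ∂P := fun y =>
    ((hX y).comp hg).lintegral_eq
  simp only [hsection, lintegral_const, measure_univ, mul_one]

theorem lintegral_sq_lintegral_le_of_identDistrib (hF : Measurable (Function.uncurry F))
    (hX : ∀ y, IdentDistrib (fun ω => F ω y) X P P) :
    ∫⁻ ω, (∫⁻ y, F ω y ∂ν) ^ 2 ∂P ≤ ∫⁻ ω, X ω ^ 2 ∂P :=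
  calc ∫⁻ ω, (∫⁻ y, F ω y ∂ν) ^ 2 ∂P ≤ ∫⁻ ω, ∫⁻ y, F ω y ^ 2 ∂ν ∂P :=
        lintegral_mono fun _ =>
          sq_lintegral_le_lintegral_sq (hF.comp measurable_prodMk_left).aemeasurable
    _ = ∫⁻ ω, X ω ^ 2 ∂P :=
        lintegral_lintegral_comp_eq_of_identDistrib hF hX (measurable_id.pow_const 2)

end Averaging

section Variance

variable {Ω : Type*} [MeasurableSpace Ω] {P : Measure Ω} {f g : Ω → ℝ≥0∞}

theorem rVar_eq_of_lintegral_sq_ne_top (hf : AEMeasurable f P) (hf2 : ∫⁻ ω, f ω ^ 2 ∂P ≠ ∞) :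
    rVar P f = (∫⁻ ω, f ω ^ 2 ∂P).toReal - (∫⁻ ω, f ω ∂P).toReal ^ 2 := by
  have hsq_lt_top : ∀ᵐ ω ∂P, f ω ^ 2 < ∞ := ae_lt_top' (hf.pow_const 2) hf2
  have hlt_top : ∀ᵐ ω ∂P, f ω < ∞ := hsq_lt_top.mono fun ω h => by simpa using h
  simp only [rVar, ← ENNReal.toReal_pow, integral_toReal hf hlt_top,
    integral_toReal (hf.pow_const 2) hsq_lt_top]

theorem rVar_le_of_lintegral_eq_of_lintegral_sq_le (hf : AEMeasurable f P)
    (hg : AEMeasurable g P) (h1 : ∫⁻ ω, f ω ∂P = ∫⁻ ω, g ω ∂P)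
    (h2 : ∫⁻ ω, f ω ^ 2 ∂P ≤ ∫⁻ ω, g ω ^ 2 ∂P) (hg2 : ∫⁻ ω, g ω ^ 2 ∂P ≠ ∞) :
    rVar P f ≤ rVar P g := by
  rw [rVar_eq_of_lintegral_sq_ne_top hf (ne_top_of_le_ne_top hg2 h2),
    rVar_eq_of_lintegral_sq_ne_top hg hg2, h1]
  gcongr

end Variance

theorem StationaryRM.identDistrib_preimage_add_right {d : ℕ} {Ω : Type*} [MeasurableSpace Ω]
    {P : Measure Ω} {Φ : Ω → Measure (Euc d)} (hΦ : StationaryRM P Φ) (hΦm : Measurable Φ)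
    {B : Set (Euc d)} (hB : MeasurableSet B) (y : Euc d) :
    IdentDistrib (fun ω => Φ ω ((· + y) ⁻¹' B)) (fun ω => Φ ω B) P P := by
  have h : IdentDistrib (fun ω => (Φ ω).map (· + y)) Φ P P :=
    { aemeasurable_fst :=
        ((Measure.measurable_map _ (measurable_add_const y)).comp hΦm).aemeasurable
      aemeasurable_snd := hΦm.aemeasurable
      map_eq := by simpa only [sub_neg_eq_add] using hΦ (-y) }
  simpa only [Function.comp_def, Measure.map_apply (measurable_add_const y) hB]
    using h.comp (Measure.measurable_coe hB)

/-- Lemma: deterministic smoothing of a stationary locally square-integrable random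
measure decreases the variance: `Var[LΦ(B)] ≤ Var[Φ(B)]` for bounded Borel `B`. -/
theorem smoothing_variance_le
    {d : ℕ} {Ω : Type} [MeasurableSpace Ω]
    (P : Measure Ω) [IsProbabilityMeasure P]
    (Φ : Ω → Measure (Euc d)) (hΦm : Measurable Φ)
    (hΦlf : ∀ ω, IsLocallyFiniteMeasure (Φ ω))
    (hΦstat : StationaryRM P Φ) (hΦsq : LocSqInt P Φ)
    (L0 : Measure (Euc d)) [IsProbabilityMeasure L0] :
    ∀ B : Set (Euc d), MeasurableSet B → Bornology.IsBounded B →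
      rVar P (fun ω => (L0.bind (fun y => Measure.map (fun z => z + y) (Φ ω))) B) ≤
        rVar P (fun ω => Φ ω B) := by
  intro B hB hBb
  set F : Ω → Euc d → ℝ≥0∞ := fun ω y => Φ ω ((· + y) ⁻¹' B)
  have hF : Measurable (Function.uncurry F) :=
    measurable_measure_prodMk_left_of_isLocallyFiniteMeasure (hΦm.comp measurable_fst)
      (fun p => hΦlf p.1) ((measurable_snd.add measurable_fst.snd) hB)
  have hstat := hΦstat.identDistrib_preimage_add_right hΦm hB
  have hsmooth :
      (fun ω => (L0.bind fun y => (Φ ω).map (· + y)) B) = fun ω => ∫⁻ y, F ω y ∂L0 :=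
    funext fun ω => bind_map_add_right_apply (Φ ω) L0 hB
  rw [hsmooth]
  exact rVar_le_of_lintegral_eq_of_lintegral_sq_le hF.lintegral_prod_right'.aemeasurable
    ((Measure.measurable_coe hB).comp hΦm).aemeasurable
    (lintegral_lintegral_comp_eq_of_identDistrib hF hstat measurable_id)
    (lintegral_sq_lintegral_le_of_identDistrib hF hstat) (hΦsq B hB hBb).ne
end
end

section
/- Let W ∈ 𝒦₀ and let μ, ν be finite Borel measures on ℝ^d with μ(ℝ^d) = ν(ℝ^d). Then lim_{r→∞} λ_d(rW)⁻¹ ∫_{rW} (μ(rW − x) − ν(rW − x)) dx = 0, where rW − x := {r w − x : w ∈ W} and λ_d is Lebesgue measure. Equivalently, for every finite signed Borel measure η on ℝ^d with η(ℝ^d) = 0, λ_d(rW)⁻¹ ∫_{rW} η(rW − x) dx → 0 as r → ∞. -/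
open MeasureTheory Filter Set ProbabilityTheory
open scoped ENNReal NNReal Topology Pointwise

noncomputable section

/-! Fubini turns the average of `κ(S - x)` over a window `S` into
`∫ λ(S ∩ (S - y)) / λ(S) κ(dy)`. For `S = r • W` the integrand tends to `1` for each fixed `y`,
because `(r - t) • W ⊆ r • W ∩ (r • W - y)` as soon as `y ∈ t • W`, so by dominated convergence
the average tends to `κ(ℝ^d)`, and the difference for `μ` and `ν` to `0`. Since `W` need not be
Borel, it is first replaced by its interior, which differs from it by the null frontier of a
convex set. -/

namespace MeasureTheory

section TranslatedMeasures

variable {G : Type*} [MeasurableSpace G] [AddGroup G] [MeasurableAdd₂ G]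
  {μ κ : Measure G} [SFinite κ]

theorem integrableOn_measureReal_preimage_add_right [IsFiniteMeasure κ] {A B : Set G}
    (hA : μ A ≠ ∞) (hB : MeasurableSet B) : IntegrableOn (fun x => κ.real ((· + x) ⁻¹' B)) A μ :=
  Measure.integrableOn_of_bounded hA
    (measurable_measure_add_right κ hB).ennreal_toReal.aestronglyMeasurable
    (M := κ.real univ) (ae_of_all _ fun _ => by
      rw [Real.norm_of_nonneg measureReal_nonneg]
      exact measureReal_mono (subset_univ _))

variable [SFinite μ]

theorem setLIntegral_measure_preimage_add_right (A : Set G) {B : Set G} (hB : MeasurableSet B) :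
    ∫⁻ x in A, κ ((· + x) ⁻¹' B) ∂μ = ∫⁻ y, μ (A ∩ (y + ·) ⁻¹' B) ∂κ := by
  have hs : MeasurableSet {p : G × G | p.2 + p.1 ∈ B} :=
    hB.preimage (measurable_snd.add measurable_fst)
  calc ∫⁻ x in A, κ ((· + x) ⁻¹' B) ∂μ = (μ.restrict A).prod κ {p | p.2 + p.1 ∈ B} :=
        (Measure.prod_apply hs).symm
    _ = ∫⁻ y, μ (A ∩ (y + ·) ⁻¹' B) ∂κ := by
        rw [Measure.prod_apply_symm hs]
        refine lintegral_congr fun y => ?_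
        rw [inter_comm, ← Measure.restrict_apply (hB.preimage (measurable_const_add y))]
        rfl

theorem ae_measure_preimage_add_right_eq_zero [μ.IsAddLeftInvariant] {N : Set G} (hN : μ N = 0) :
    ∀ᵐ x ∂μ, κ ((· + x) ⁻¹' N) = 0 := by
  have hM : MeasurableSet (toMeasurable μ N) := measurableSet_toMeasurable μ N
  have hs : MeasurableSet {p : G × G | p.2 + p.1 ∈ toMeasurable μ N} :=
    hM.preimage (measurable_snd.add measurable_fst)
  have hprod : μ.prod κ {p | p.2 + p.1 ∈ toMeasurable μ N} = 0 := by
    rw [Measure.prod_apply_symm hs]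
    refine lintegral_eq_zero_of_ae_eq_zero (ae_of_all _ fun y => ?_)
    change μ ((y + ·) ⁻¹' toMeasurable μ N) = 0
    rw [measure_preimage_add, measure_toMeasurable, hN]
  filter_upwards [(Measure.measure_prod_null hs).mp hprod] with x hx
  exact measure_mono_null (preimage_mono (subset_toMeasurable μ N)) hx

theorem ae_measure_preimage_add_right_congr [μ.IsAddLeftInvariant] {S T : Set G}
    (hST : S =ᵐ[μ] T) : (fun x => κ ((· + x) ⁻¹' S)) =ᵐ[μ] fun x => κ ((· + x) ⁻¹' T) := by
  obtain ⟨hS, hT⟩ := ae_eq_set.mp hST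
  filter_upwards [ae_measure_preimage_add_right_eq_zero (κ := κ) hS,
    ae_measure_preimage_add_right_eq_zero (κ := κ) hT] with x hxS hxT
  exact measure_congr (ae_eq_set.mpr ⟨hxS, hxT⟩)

theorem measurable_measure_inter_preimage_add_left (A : Set G) {B : Set G}
    (hB : MeasurableSet B) : Measurable fun y => μ (A ∩ (y + ·) ⁻¹' B) := by
  have hs : MeasurableSet {p : G × G | p.2 + p.1 ∈ B} :=
    hB.preimage (measurable_snd.add measurable_fst)
  convert measurable_measure_prodMk_right (μ := μ.restrict A) hs using 1 with y
  funext y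
  rw [inter_comm, ← Measure.restrict_apply (hB.preimage (measurable_const_add y))]
  rfl

theorem setIntegral_measureReal_preimage_add_right [IsFiniteMeasure κ] {S : Set G}
    (hS : MeasurableSet S) (hSfin : μ S ≠ ∞) :
    ∫ x in S, κ.real ((· + x) ⁻¹' S) ∂μ = ∫ y, μ.real (S ∩ (y + ·) ⁻¹' S) ∂κ := by
  simp only [measureReal_def]
  rw [integral_toReal (measurable_measure_add_right κ hS).aemeasurable
      (ae_of_all _ fun _ => measure_lt_top κ _),
    integral_toReal (measurable_measure_inter_preimage_add_left S hS).aemeasurable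
      (ae_of_all _ fun _ => (measure_mono inter_subset_left).trans_lt hSfin.lt_top),
    setLIntegral_measure_preimage_add_right S hS]

theorem tendsto_setAverage_measureReal_preimage_add_right [IsFiniteMeasure κ] {ι : Type*}
    {l : Filter ι} [l.IsCountablyGenerated] {S : ι → Set G} (hS : ∀ i, MeasurableSet (S i))
    (hSfin : ∀ i, μ (S i) ≠ ∞)
    (hcov : ∀ y, Tendsto (fun i => μ.real (S i ∩ (y + ·) ⁻¹' S i) / μ.real (S i)) l (𝓝 1)) :
    Tendsto (fun i => ⨍ x in S i, κ.real ((· + x) ⁻¹' S i) ∂μ) l (𝓝 (κ.real univ)) := by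
  have havg : ∀ i, ⨍ x in S i, κ.real ((· + x) ⁻¹' S i) ∂μ =
      ∫ y, μ.real (S i ∩ (y + ·) ⁻¹' S i) / μ.real (S i) ∂κ := fun i => by
    rw [setAverage_eq, setIntegral_measureReal_preimage_add_right (hS i) (hSfin i), integral_div,
      smul_eq_mul, inv_mul_eq_div]
  simp only [havg]
  have hlim : Tendsto (fun i => ∫ y, μ.real (S i ∩ (y + ·) ⁻¹' S i) / μ.real (S i) ∂κ) l
      (𝓝 (∫ _, (1 : ℝ) ∂κ)) := by
    refine tendsto_integral_filter_of_dominated_convergence (fun _ => 1)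
      (Eventually.of_forall fun i => ?_) (Eventually.of_forall fun i => ae_of_all _ fun y => ?_)
      (integrable_const 1) (ae_of_all _ hcov)
    · exact ((measurable_measure_inter_preimage_add_left (S i) (hS i)).ennreal_toReal.div_const
        _).aestronglyMeasurable
    · rw [Real.norm_of_nonneg (by positivity)]
      exact div_le_one_of_le₀ (measureReal_mono inter_subset_left (hSfin i)) measureReal_nonneg
  simpa using hlim

end TranslatedMeasures

end MeasureTheory

section ConvexWindows

variable {E : Type*} [NormedAddCommGroup E] [NormedSpace ℝ E] {V : Set E}

theorem Convex.sub_smul_subset_inter_preimage_add (hV : Convex ℝ V) (h0 : (0 : E) ∈ V)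
    {y : E} {t r : ℝ} (ht : 0 ≤ t) (htr : t ≤ r) (hy : y ∈ t • V) :
    (r - t) • V ⊆ r • V ∩ (y + ·) ⁻¹' (r • V) := by
  have hsplit : r • V = (r - t) • V + t • V := by
    rw [← hV.add_smul (sub_nonneg.2 htr) ht, sub_add_cancel]
  intro x hx
  rw [hsplit]
  exact ⟨by simpa using add_mem_add hx (zero_mem_smul_set h0 : (0 : E) ∈ t • V),
    by simpa [add_comm] using add_mem_add hx hy⟩

variable [MeasurableSpace E] [BorelSpace E] [FiniteDimensional ℝ E] (μ : Measure E)
  [μ.IsAddHaarMeasure]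

theorem MeasureTheory.Measure.addHaar_real_smul_of_nonneg {r : ℝ} (hr : 0 ≤ r) (s : Set E) :
    μ.real (r • s) = r ^ Module.finrank ℝ E * μ.real s := by
  rw [measureReal_def, Measure.addHaar_smul_of_nonneg μ hr, ENNReal.toReal_mul,
    ENNReal.toReal_ofReal (by positivity), measureReal_def]

theorem Convex.tendsto_measureReal_inter_preimage_add_div (hV : Convex ℝ V) (h0 : V ∈ 𝓝 0)
    (hfin : μ V ≠ ∞) (y : E) :
    Tendsto (fun r : ℝ => μ.real (r • V ∩ (y + ·) ⁻¹' (r • V)) / μ.real (r • V)) atTop (𝓝 1) := by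
  obtain ⟨t, ht, hyt⟩ := (absorbent_nhds_zero (𝕜 := ℝ) h0 y).exists_pos
  have hy : y ∈ t • V := hyt t (Real.norm_of_nonneg ht.le).ge rfl
  have hVpos : 0 < μ.real V := ENNReal.toReal_pos (μ.measure_pos_of_mem_nhds h0).ne' hfin
  have hfin_smul : ∀ r : ℝ, μ (r • V) ≠ ∞ := fun r => by
    rw [Measure.addHaar_smul]
    exact ENNReal.mul_ne_top ENNReal.ofReal_ne_top hfin
  have hlower : ∀ r, t < r →
      ((r - t) / r) ^ Module.finrank ℝ E ≤ μ.real (r • V ∩ (y + ·) ⁻¹' (r • V)) / μ.real (r • V) :=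
    fun r htr => calc
      ((r - t) / r) ^ Module.finrank ℝ E = μ.real ((r - t) • V) / μ.real (r • V) := by
        rw [μ.addHaar_real_smul_of_nonneg (sub_nonneg.2 htr.le),
          μ.addHaar_real_smul_of_nonneg (ht.trans htr).le, div_pow]
        field_simp [(ht.trans htr).ne']
      _ ≤ μ.real (r • V ∩ (y + ·) ⁻¹' (r • V)) / μ.real (r • V) := by
        gcongr
        · exact ((measure_mono inter_subset_left).trans_lt (hfin_smul r).lt_top).ne
        · exact hV.sub_smul_subset_inter_preimage_add (mem_of_mem_nhds h0) ht.le htr.le hy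
  have hbound : Tendsto (fun r : ℝ => ((r - t) / r) ^ Module.finrank ℝ E) atTop (𝓝 1) := by
    have h : Tendsto (fun r : ℝ => 1 - t / r) atTop (𝓝 1) := by
      simpa using (tendsto_const_nhds (x := (1 : ℝ))).sub
        ((tendsto_const_nhds (x := t)).div_atTop tendsto_id)
    rw [← one_pow (Module.finrank ℝ E)]
    refine (h.pow (Module.finrank ℝ E)).congr' ?_
    filter_upwards [eventually_gt_atTop 0] with r hr
    rw [one_sub_div hr.ne']
  refine tendsto_of_tendsto_of_tendsto_of_le_of_le' hbound tendsto_const_nhds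
    ((eventually_gt_atTop t).mono hlower) (Eventually.of_forall fun r => ?_)
  exact div_le_one_of_le₀ (measureReal_mono inter_subset_left (hfin_smul r)) measureReal_nonneg

end ConvexWindows

/-- Lemma: for `W ∈ 𝒦₀` and finite Borel measures `μ, ν` of equal total mass,
`λ_d(rW)⁻¹ ∫_{rW} (μ(rW − x) − ν(rW − x)) dx → 0` as `r → ∞`. -/
theorem averaged_difference_tendsto_zero
    {d : ℕ} (W : Set (Euc d)) (hW : IsK0 W)
    (μ ν : Measure (Euc d)) [IsFiniteMeasure μ] [IsFiniteMeasure ν]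
    (hmass : μ univ = ν univ) :
    Tendsto (fun r : ℝ =>
        (volume (r • W)).toReal⁻¹ *
          ∫ x in r • W,
            ((μ ((fun y => y + x) ⁻¹' (r • W))).toReal -
              (ν ((fun y => y + x) ⁻¹' (r • W))).toReal))
      atTop (𝓝 0) := by
  obtain ⟨hconv, hbdd, h0⟩ := hW
  set S : ℝ → Set (Euc d) := fun r => interior (r • W)
  have hWS : ∀ r : ℝ, r • W =ᵐ[volume] S r := fun r =>
    (interior_ae_eq_of_null_frontier ((hconv.smul r).addHaar_frontier volume)).symm
  have hSfin : ∀ r : ℝ, volume (S r) ≠ ∞ := fun r =>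
    ((measure_mono interior_subset).trans_lt (hbdd.smul₀ r).measure_lt_top).ne
  have hcov (y : Euc d) :
      Tendsto (fun r => volume.real (S r ∩ (y + ·) ⁻¹' S r) / volume.real (S r)) atTop (𝓝 1) := by
    refine (hconv.interior.tendsto_measureReal_inter_preimage_add_div volume
      (isOpen_interior.mem_nhds h0)
      ((measure_mono interior_subset).trans_lt hbdd.measure_lt_top).ne y).congr' ?_
    filter_upwards [eventually_gt_atTop 0] with r hr
    simp only [S, interior_smul₀ hr.ne']
  have havg (κ : Measure (Euc d)) [IsFiniteMeasure κ] :=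
    tendsto_setAverage_measureReal_preimage_add_right (κ := κ)
      (fun _ => isOpen_interior.measurableSet) hSfin hcov
  have hlim := (havg μ).sub (havg ν)
  rw [measureReal_def, measureReal_def, hmass, sub_self] at hlim
  refine hlim.congr fun r => ?_
  rw [setAverage_eq, setAverage_eq, ← smul_sub, ← integral_sub
    (integrableOn_measureReal_preimage_add_right (hSfin r) isOpen_interior.measurableSet)
    (integrableOn_measureReal_preimage_add_right (hSfin r) isOpen_interior.measurableSet),
    smul_eq_mul, measureReal_def, measure_congr (hWS r), Measure.restrict_congr_set (hWS r)]
  congr 1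
  refine integral_congr_ae ?_
  filter_upwards [ae_restrict_of_ae (ae_measure_preimage_add_right_congr (κ := μ) (hWS r)),
    ae_restrict_of_ae (ae_measure_preimage_add_right_congr (κ := ν) (hWS r))] with x hμ hν
  simp only [measureReal_def, hμ, hν, S]
end
end
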